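/- Let μ be a non-atomic Borel probability measure on the Cantor space Ω. Then there exists a semimeasure bound a from finite binary strings to [0,∞) such that the function t : Ω → [0,∞] defined by t(ω) = sup { a(ω|n)/μ([ω|n]) : n ∈ ℕ, μ([ω|n]) > 0 } satisfies ∫_{{ω : t(ω) > 2}} t(ω)/log t(ω) dμ(ω) = +∞. -/

import Mathlib

open MeasureTheory Filter
open scoped ENNReal

/-- The cylinder `[x]` of a finite binary string `x` in the Cantor space `ℕ → Bool`:
the set of infinite sequences extending `x`. -/
def cyl (x : List Bool) : Set (ℕ → Bool) :=
  {ω | ∀ i : ℕ, (h : i < x.length) → ω i = x.get ⟨i, h⟩}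

/-- `seg ω n` is the string formed by the first `n` bits of `ω`. -/
def seg (ω : ℕ → Bool) (n : ℕ) : List Bool :=
  List.ofFn (fun i : Fin n => ω i)

/-- A set of strings is prefix-free if no element is a proper prefix of another. -/
def PrefixFree (S : Set (List Bool)) : Prop :=
  ∀ x ∈ S, ∀ y ∈ S, x <+: y → x = y

/-- A nonnegative function on strings is a semimeasure bound if its sum over
every prefix-free set of strings is at most `1`. -/
def IsSemimeasureBound (a : List Bool → ℝ) : Prop :=
  (∀ x, 0 ≤ a x) ∧
  ∀ S : Set (List Bool), PrefixFree S → ∑' x : S, ENNReal.ofReal (a x.1) ≤ 1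

/-- `tFun μ a ω = sup { a(ω|n) / μ([ω|n]) : n ∈ ℕ, μ([ω|n]) > 0 }`. -/
noncomputable def tFun (μ : Measure (ℕ → Bool)) (a : List Bool → ℝ)
    (ω : ℕ → Bool) : ℝ≥0∞ :=
  ⨆ (n : ℕ) (_ : 0 < μ (cyl (seg ω n))),
    ENNReal.ofReal (a (seg ω n)) / μ (cyl (seg ω n))

lemma length_seg (ω : ℕ → Bool) (n : ℕ) : (seg ω n).length = n := by simp [seg]

lemma seg_succ (ω : ℕ → Bool) (n : ℕ) : seg ω (n+1) = seg ω n ++ [ω n] := by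
  rw [seg, List.ofFn_succ']
  simp [seg, List.concat_eq_append]

lemma seg_getElem (ω : ℕ → Bool) (n i : ℕ) (h : i < (seg ω n).length) :
    (seg ω n)[i] = ω i := by
  simp [seg]

lemma mem_cyl {ω : ℕ → Bool} {x : List Bool} : ω ∈ cyl x ↔ seg ω x.length = x := by
  constructor
  · intro h
    apply List.ext_getElem (by simp [seg])
    intro i h1 h2
    rw [seg_getElem]
    exact h i h2
  · intro h i hi
    have h2 : i < (seg ω x.length).length := by rw [length_seg]; exact hi
    have h3 : (seg ω x.length)[i] = ω i := seg_getElem ω x.length i h2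
    rw [List.get_eq_getElem, ← h3]
    simp only [h]

lemma cyl_nil : cyl ([] : List Bool) = Set.univ := by
  ext ω; simp [cyl]

lemma measurableSet_cyl (x : List Bool) : MeasurableSet (cyl x) := by
  have h : cyl x = ⋂ i : Fin x.length, (fun ω : ℕ → Bool => ω i) ⁻¹' {x.get i} := by
    ext ω
    simp only [cyl, Set.mem_setOf_eq, Set.mem_iInter, Set.mem_preimage, Set.mem_singleton_iff]
    exact ⟨fun h i => h i i.2, fun h i hi => h ⟨i, hi⟩⟩
  rw [h]
  exact MeasurableSet.iInter fun i => (measurable_pi_apply _) (measurableSet_singleton _)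

lemma cyl_append_subset (x y : List Bool) : cyl (x ++ y) ⊆ cyl x := by
  intro ω h i hi
  have hi' : i < (x ++ y).length := by simp; omega
  rw [h i hi']
  simp [List.get_eq_getElem, List.getElem_append_left hi]

lemma mem_cyl_append {ω : ℕ → Bool} {x : List Bool} {b : Bool} :
    ω ∈ cyl (x ++ [b]) ↔ ω ∈ cyl x ∧ ω x.length = b := by
  rw [mem_cyl, mem_cyl]
  have hl : (x ++ [b]).length = x.length + 1 := by simp
  rw [hl, seg_succ]
  constructor
  · intro h
    obtain ⟨h1, h2⟩ := List.append_inj' h (by simp)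
    refine ⟨h1, by simpa using h2⟩
  · rintro ⟨h1, h2⟩
    rw [h1, h2]

lemma cyl_eq_union (x : List Bool) :
    cyl x = cyl (x ++ [false]) ∪ cyl (x ++ [true]) := by
  ext ω
  simp only [Set.mem_union, mem_cyl_append]
  constructor
  · intro h
    cases hb : ω x.length
    · exact Or.inl ⟨h, rfl⟩
    · exact Or.inr ⟨h, rfl⟩
  · rintro (⟨h, _⟩ | ⟨h, _⟩) <;> exact h

lemma measure_cyl_split (μ : Measure (ℕ → Bool)) (x : List Bool) :
    μ (cyl x) = μ (cyl (x ++ [false])) + μ (cyl (x ++ [true])) := by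
  rw [cyl_eq_union x]
  rw [measure_union ?_ (measurableSet_cyl _)]
  refine Set.disjoint_left.mpr fun ω h1 h2 => ?_
  rw [mem_cyl_append] at h1 h2
  rw [h1.2] at h2
  exact Bool.noConfusion h2.2

noncomputable def nxt (μ : Measure (ℕ → Bool)) (x : List Bool) : Bool :=
  if μ (cyl (x ++ [false])) ≤ μ (cyl (x ++ [true])) then true else false

noncomputable def Br (μ : Measure (ℕ → Bool)) : ℕ → List Bool
  | 0 => []
  | n+1 => Br μ n ++ [nxt μ (Br μ n)]

noncomputable def om0 (μ : Measure (ℕ → Bool)) : ℕ → Bool := fun n => nxt μ (Br μ n)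

lemma length_Br (μ : Measure (ℕ → Bool)) (n : ℕ) : (Br μ n).length = n := by
  induction n with
  | zero => rfl
  | succ n ih => simp [Br, ih]

lemma seg_om0 (μ : Measure (ℕ → Bool)) (n : ℕ) : seg (om0 μ) n = Br μ n := by
  induction n with
  | zero => rfl
  | succ n ih => rw [seg_succ, ih]; rfl

lemma Br_prefix (μ : Measure (ℕ → Bool)) {m n : ℕ} (h : m ≤ n) : Br μ m <+: Br μ n := by
  obtain ⟨k, rfl⟩ := Nat.exists_eq_add_of_le h
  clear h
  induction k with
  | zero => exact List.prefix_refl _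
  | succ k ih => exact ih.trans (List.prefix_append _ _)

lemma cyl_Br_anti (μ : Measure (ℕ → Bool)) {m n : ℕ} (h : m ≤ n) :
    cyl (Br μ n) ⊆ cyl (Br μ m) := by
  obtain ⟨t, ht⟩ := Br_prefix μ h
  rw [← ht]
  exact cyl_append_subset _ _

lemma Br_half (μ : Measure (ℕ → Bool)) (n : ℕ) :
    μ (cyl (Br μ n)) ≤ 2 * μ (cyl (Br μ (n+1))) := by
  have hs := measure_cyl_split μ (Br μ n)
  have hBr : Br μ (n+1) = Br μ n ++ [nxt μ (Br μ n)] := rfl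
  by_cases h : μ (cyl (Br μ n ++ [false])) ≤ μ (cyl (Br μ n ++ [true]))
  · have hn : nxt μ (Br μ n) = true := if_pos h
    rw [hBr, hn, hs, two_mul]
    exact add_le_add_left h _
  · have hn : nxt μ (Br μ n) = false := if_neg h
    rw [hBr, hn, hs, two_mul]
    exact add_le_add_right (le_of_not_ge h) _

lemma Br_pos (μ : Measure (ℕ → Bool)) [IsProbabilityMeasure μ] (n : ℕ) :
    0 < μ (cyl (Br μ n)) := by
  induction n with
  | zero =>
    have : Br μ 0 = [] := rfl
    rw [this, cyl_nil]
    simp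
  | succ n ih =>
    rcases eq_or_ne (μ (cyl (Br μ (n+1)))) 0 with h | h
    · exfalso
      have := Br_half μ n
      rw [h, mul_zero] at this
      exact absurd (le_antisymm this bot_le) (ne_of_gt ih)
    · exact pos_iff_ne_zero.mpr h

lemma muB_anti (μ : Measure (ℕ → Bool)) : Antitone (fun n => μ (cyl (Br μ n))) :=
  antitone_nat_of_succ_le fun n => measure_mono (cyl_Br_anti μ (Nat.le_succ n))

lemma iInter_cyl_Br (μ : Measure (ℕ → Bool)) : ⋂ n, cyl (Br μ n) = {om0 μ} := by
  ext ω
  simp only [Set.mem_iInter, Set.mem_singleton_iff]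
  constructor
  · intro h
    funext i
    have h1 : seg ω (i+1) = Br μ (i+1) := by
      have := mem_cyl.mp (h (i+1))
      rwa [length_Br] at this
    have h2 : seg ω (i+1) = seg (om0 μ) (i+1) := h1.trans (seg_om0 μ (i+1)).symm
    have hl1 : i < (seg ω (i+1)).length := by rw [length_seg]; omega
    have hl2 : i < (seg (om0 μ) (i+1)).length := by rw [length_seg]; omega
    calc ω i = (seg ω (i+1))[i] := (seg_getElem ω (i+1) i hl1).symm
      _ = (seg (om0 μ) (i+1))[i] := by simp only [h2]
      _ = om0 μ i := seg_getElem _ (i+1) i hl2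
  · rintro rfl n
    refine mem_cyl.mpr ?_
    rw [length_Br]
    exact seg_om0 μ n

lemma tendsto_muB (μ : Measure (ℕ → Bool)) [IsProbabilityMeasure μ]
    (hna : ∀ ω : ℕ → Bool, μ {ω} = 0) :
    Tendsto (fun n => μ (cyl (Br μ n))) atTop (nhds 0) := by
  have h := tendsto_measure_iInter_atTop (μ := μ) (s := fun n => cyl (Br μ n))
    (fun n => (measurableSet_cyl _).nullMeasurableSet)
    (fun m n h => cyl_Br_anti μ h) ⟨0, measure_ne_top μ _⟩
  rw [iInter_cyl_Br, hna] at h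
  exact h

noncomputable def aFun (μ : Measure (ℕ → Bool)) : List Bool → ℝ :=
  fun x => if x = Br μ x.length then 1 else 0

lemma aFun_ne_zero {μ : Measure (ℕ → Bool)} {x : List Bool} (h : aFun μ x ≠ 0) :
    x = Br μ x.length := by
  by_contra hc
  exact h (if_neg hc)

lemma aFun_bound (μ : Measure (ℕ → Bool)) : IsSemimeasureBound (aFun μ) := by
  constructor
  · intro x
    unfold aFun
    split <;> norm_num
  · intro S hS
    by_cases h : ∃ x : S, aFun μ x.1 ≠ 0
    · obtain ⟨x₀, hx₀⟩ := h
      have key : ∀ y : S, y ≠ x₀ → ENNReal.ofReal (aFun μ y.1) = 0 := by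
        intro y hy
        by_contra hy0
        have hy1 : aFun μ y.1 ≠ 0 := by
          intro hz
          rw [hz] at hy0
          simp at hy0
        have e1 : y.1 = Br μ y.1.length := aFun_ne_zero hy1
        have e2 : x₀.1 = Br μ x₀.1.length := aFun_ne_zero hx₀
        have heq : y.1 = x₀.1 := by
          rcases le_total y.1.length x₀.1.length with hl | hl
          · have hpre : y.1 <+: x₀.1 := by
              rw [e1, e2]; exact Br_prefix μ hl
            exact hS y.1 y.2 x₀.1 x₀.2 hpre
          · have hpre : x₀.1 <+: y.1 := by
              rw [e1, e2]; exact Br_prefix μ hl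
            exact (hS x₀.1 x₀.2 y.1 y.2 hpre).symm
        exact hy (Subtype.ext heq)
      rw [tsum_eq_single x₀ key]
      unfold aFun
      split <;> simp
    · push_neg at h
      have hz : ∀ x : S, ENNReal.ofReal (aFun μ x.1) = 0 := by
        intro x
        rw [h x]
        simp
      calc ∑' x : S, ENNReal.ofReal (aFun μ x.1) = ∑' _ : S, (0 : ℝ≥0∞) := tsum_congr hz
        _ = 0 := tsum_zero
        _ ≤ 1 := zero_le_one

lemma tFun_ge (μ : Measure (ℕ → Bool)) [IsProbabilityMeasure μ] (ω : ℕ → Bool) (n : ℕ)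
    (hω : ω ∈ cyl (Br μ n)) :
    (μ (cyl (Br μ n)))⁻¹ ≤ tFun μ (aFun μ) ω := by
  have hseg : seg ω n = Br μ n := by
    have := mem_cyl.mp hω
    rwa [length_Br] at this
  have hpos : 0 < μ (cyl (seg ω n)) := by rw [hseg]; exact Br_pos μ n
  have hval : ENNReal.ofReal (aFun μ (seg ω n)) / μ (cyl (seg ω n))
      = (μ (cyl (Br μ n)))⁻¹ := by
    rw [hseg]
    simp [aFun, length_Br, one_div]
  calc (μ (cyl (Br μ n)))⁻¹ = ENNReal.ofReal (aFun μ (seg ω n)) / μ (cyl (seg ω n)) := hval.symm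
    _ ≤ tFun μ (aFun μ) ω := le_iSup_of_le n (le_iSup_of_le hpos le_rfl)

lemma tFun_le (μ : Measure (ℕ → Bool)) [IsProbabilityMeasure μ] (ω : ℕ → Bool) (n : ℕ)
    (h2 : ω ∉ cyl (Br μ (n+1))) :
    tFun μ (aFun μ) ω ≤ (μ (cyl (Br μ n)))⁻¹ := by
  refine iSup_le fun m => iSup_le fun hm => ?_
  by_cases hseg : seg ω m = Br μ m
  · have hmn : m ≤ n := by
      by_contra hc
      push_neg at hc
      refine h2 (cyl_Br_anti μ hc ?_)
      refine mem_cyl.mpr ?_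
      rw [length_Br]
      exact hseg
    rw [hseg]
    have hone : ENNReal.ofReal (aFun μ (Br μ m)) = 1 := by simp [aFun, length_Br]
    rw [hone, one_div]
    exact ENNReal.inv_le_inv.mpr (measure_mono (cyl_Br_anti μ hmn))
  · have hzero : aFun μ (seg ω m) = 0 := by
      unfold aFun
      rw [if_neg]
      rw [length_seg]
      exact hseg
    simp [hzero]

lemma tFun_eq (μ : Measure (ℕ → Bool)) [IsProbabilityMeasure μ] (ω : ℕ → Bool) (n : ℕ)
    (h1 : ω ∈ cyl (Br μ n)) (h2 : ω ∉ cyl (Br μ (n+1))) :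
    tFun μ (aFun μ) ω = (μ (cyl (Br μ n)))⁻¹ :=
  le_antisymm (tFun_le μ ω n h2) (tFun_ge μ ω n h1)

lemma core_div (p : ℕ → ℝ) (h0 : ∀ n, 0 < p n) (h2 : ∀ n, p n < 1/2)
    (hmono : ∀ n, p (n+1) ≤ p n) (hhalf : ∀ n, p n ≤ 2 * p (n+1))
    (htend : Tendsto p atTop (nhds 0)) (M : ℝ) :
    ∃ N, M ≤ ∑ n ∈ Finset.range N, (p n - p (n+1)) / (p n * Real.logb 2 (1 / p n)) := by
  set L : ℕ → ℝ := fun n => Real.logb 2 (1 / p n) with hLdef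
  have hL1 : ∀ n, 1 < L n := by
    intro n
    have h21 : (2:ℝ) < 1 / p n := by
      rw [lt_div_iff₀ (h0 n)]
      nlinarith [h2 n, h0 n]
    have hlt : Real.logb 2 2 < Real.logb 2 (1 / p n) :=
      Real.logb_lt_logb (by norm_num) (by norm_num) h21
    calc (1:ℝ) = Real.logb 2 2 := (Real.logb_self_eq_one (by norm_num)).symm
      _ < L n := hlt
  have hLpos : ∀ n, 0 < L n := fun n => lt_trans one_pos (hL1 n)
  have hLmono : ∀ n, L n ≤ L (n+1) := by
    intro n
    exact Real.logb_le_logb_of_le (by norm_num) (one_div_pos.mpr (h0 n))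
      (one_div_le_one_div_of_le (h0 (n+1)) (hmono n))
  have key : ∀ n, (1/3) * (Real.log (L (n+1)) - Real.log (L n))
      ≤ (p n - p (n+1)) / (p n * L n) := by
    intro n
    have hp := h0 n
    have hp' := h0 (n+1)
    have hdn : 0 ≤ p n - p (n+1) := by linarith [hmono n]
    -- step b
    have hb : Real.log (L (n+1)) - Real.log (L n) ≤ (L (n+1) - L n) / L n := by
      rw [← Real.log_div (ne_of_gt (hLpos (n+1))) (ne_of_gt (hLpos n))]
      calc Real.log (L (n+1) / L n) ≤ L (n+1) / L n - 1 :=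
            Real.log_le_sub_one_of_pos (div_pos (hLpos (n+1)) (hLpos n))
        _ = (L (n+1) - L n) / L n := by
            have h := (hLpos n).ne'
            field_simp
    -- step a
    have hdiff : L (n+1) - L n = (Real.log (p n) - Real.log (p (n+1))) / Real.log 2 := by
      have e1 : ∀ m, L m = - Real.log (p m) / Real.log 2 := by
        intro m
        rw [hLdef]
        simp [Real.logb, Real.log_div, one_div, Real.log_inv]
      rw [e1, e1]
      ring
    have hlog2 : (2:ℝ)/3 < Real.log 2 := by
      have := Real.log_two_gt_d9
      linarith
    have hlr : Real.log (p n) - Real.log (p (n+1)) ≤ 2 * ((p n - p (n+1)) / p n) := by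
      rw [← Real.log_div (ne_of_gt hp) (ne_of_gt hp')]
      have h1 : Real.log (p n / p (n+1)) ≤ p n / p (n+1) - 1 :=
        Real.log_le_sub_one_of_pos (by positivity)
      have h2' : p n / p (n+1) - 1 = (p n - p (n+1)) / p (n+1) := by
        have h := hp'.ne'
        field_simp
      have h3 : (p n - p (n+1)) / p (n+1) ≤ 2 * ((p n - p (n+1)) / p n) := by
        rw [mul_div_assoc', div_le_div_iff₀ hp' hp]
        nlinarith [hhalf n, hdn]
      linarith
    have ha : L (n+1) - L n ≤ 3 * ((p n - p (n+1)) / p n) := by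
      rw [hdiff]
      have hd0 : 0 ≤ (p n - p (n+1)) / p n := div_nonneg hdn hp.le
      calc (Real.log (p n) - Real.log (p (n+1))) / Real.log 2
          ≤ (2 * ((p n - p (n+1)) / p n)) / (2/3) :=
            div_le_div₀ (by linarith) hlr (by norm_num) hlog2.le
        _ = 3 * ((p n - p (n+1)) / p n) := by ring
    -- combine
    have hc1 : (1/3) * (Real.log (L (n+1)) - Real.log (L n))
        ≤ (1/3) * ((L (n+1) - L n) / L n) := by
      apply mul_le_mul_of_nonneg_left hb
      norm_num
    refine hc1.trans ?_
    rw [show (p n - p (n+1)) / (p n * L n) = ((p n - p (n+1)) / p n) / L n by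
      rw [div_div]]
    rw [show (1/3 : ℝ) * ((L (n+1) - L n) / L n) = ((1/3) * (L (n+1) - L n)) / L n by ring]
    exact div_le_div_of_nonneg_right (by linarith [ha]) (hLpos n).le
  have tele : ∀ N, (1/3) * (Real.log (L N) - Real.log (L 0))
      ≤ ∑ n ∈ Finset.range N, (p n - p (n+1)) / (p n * L n) := by
    intro N
    calc (1/3) * (Real.log (L N) - Real.log (L 0))
        = ∑ n ∈ Finset.range N, (1/3) * (Real.log (L (n+1)) - Real.log (L n)) := by
          rw [← Finset.mul_sum, Finset.sum_range_sub (fun n => Real.log (L n))]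
      _ ≤ _ := Finset.sum_le_sum fun n _ => key n
  have hLtend : Tendsto L atTop atTop := by
    have h1 : Tendsto (fun n => 1 / p n) atTop atTop := by
      simp only [one_div]
      refine Filter.Tendsto.comp tendsto_inv_nhdsGT_zero ?_
      exact tendsto_nhdsWithin_iff.mpr ⟨htend, Eventually.of_forall fun n => h0 n⟩
    exact (Real.tendsto_logb_atTop (by norm_num)).comp h1
  have hlogtend : Tendsto (fun n => Real.log (L n)) atTop atTop :=
    Real.tendsto_log_atTop.comp hLtend
  obtain ⟨N, hN⟩ := (hlogtend.eventually_ge_atTop (3 * M + Real.log (L 0))).exists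
  exact ⟨N, le_trans (by linarith) (tele N)⟩

lemma main_sum (μ : Measure (ℕ → Bool)) [IsProbabilityMeasure μ]
    (hna : ∀ ω : ℕ → Bool, μ {ω} = 0) (n₀ : ℕ)
    (hn₀ : ∀ n, n₀ ≤ n → μ (cyl (Br μ n)) < 2⁻¹) :
    ∑' k : ℕ, ((μ (cyl (Br μ (k + n₀))))⁻¹ /
        ENNReal.ofReal (Real.logb 2 (((μ (cyl (Br μ (k + n₀))))⁻¹).toReal))) *
      (μ (cyl (Br μ (k + n₀))) - μ (cyl (Br μ (k + n₀ + 1)))) = ⊤ := by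
  set p : ℕ → ℝ := fun k => (μ (cyl (Br μ (k + n₀)))).toReal with hp
  have hfin : ∀ n, μ (cyl (Br μ n)) ≠ ⊤ := fun n => measure_ne_top μ _
  have hp0 : ∀ k, 0 < p k := fun k => ENNReal.toReal_pos (Br_pos μ _).ne' (hfin _)
  have hp2 : ∀ k, p k < 1/2 := by
    intro k
    have h1 : μ (cyl (Br μ (k + n₀))) < 2⁻¹ := hn₀ (k + n₀) (by omega)
    have h2 := (ENNReal.toReal_lt_toReal (hfin _) (by norm_num)).mpr h1
    have h3 : ((2:ℝ≥0∞)⁻¹).toReal = 1/2 := by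
      rw [ENNReal.toReal_inv]
      norm_num
    rw [h3] at h2
    exact h2
  have hpmono : ∀ k, p (k+1) ≤ p k := by
    intro k
    simp only [hp]
    apply ENNReal.toReal_mono (hfin _)
    exact measure_mono (cyl_Br_anti μ (by omega))
  have hphalf : ∀ k, p k ≤ 2 * p (k+1) := by
    intro k
    simp only [hp]
    have h1 := Br_half μ (k + n₀)
    have h3 := ENNReal.toReal_mono (ENNReal.mul_ne_top (by norm_num) (hfin _)) h1
    rw [ENNReal.toReal_mul] at h3
    have h4 : ((2:ℝ≥0∞)).toReal = 2 := by norm_num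
    rw [h4] at h3
    rw [show k + 1 + n₀ = k + n₀ + 1 from by omega]
    exact h3
  have hptend : Tendsto p atTop (nhds 0) := by
    have h1 : Tendsto (fun n => μ (cyl (Br μ n))) atTop (nhds 0) := tendsto_muB μ hna
    have h2 : Tendsto (fun k => μ (cyl (Br μ (k + n₀)))) atTop (nhds 0) :=
      h1.comp (tendsto_add_atTop_nat n₀)
    have h3 := (ENNReal.tendsto_toReal (by simp : (0:ℝ≥0∞) ≠ ⊤)).comp h2
    exact h3
  have hLpos : ∀ k, 0 < Real.logb 2 (1 / p k) := fun k =>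
    Real.logb_pos (by norm_num) (one_lt_one_div (hp0 k) (by linarith [hp2 k]))
  have hterm : ∀ k : ℕ, ((μ (cyl (Br μ (k + n₀))))⁻¹ /
        ENNReal.ofReal (Real.logb 2 (((μ (cyl (Br μ (k + n₀))))⁻¹).toReal))) *
      (μ (cyl (Br μ (k + n₀))) - μ (cyl (Br μ (k + n₀ + 1))))
      = ENNReal.ofReal ((p k - p (k+1)) / (p k * Real.logb 2 (1 / p k))) := by
    intro k
    have e1 : μ (cyl (Br μ (k + n₀))) = ENNReal.ofReal (p k) :=
      (ENNReal.ofReal_toReal (hfin _)).symm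
    have e1' : μ (cyl (Br μ (k + n₀ + 1))) = ENNReal.ofReal (p (k+1)) := by
      simp only [hp]
      rw [show k + 1 + n₀ = k + n₀ + 1 from by omega]
      exact (ENNReal.ofReal_toReal (hfin _)).symm
    have einv : (μ (cyl (Br μ (k + n₀))))⁻¹ = ENNReal.ofReal (1 / p k) := by
      rw [e1, one_div, ← ENNReal.ofReal_inv_of_pos (hp0 k)]
    have etor : (((μ (cyl (Br μ (k + n₀))))⁻¹).toReal) = 1 / p k := by
      rw [einv, ENNReal.toReal_ofReal (by positivity)]
    rw [etor, einv, e1, e1']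
    rw [← ENNReal.ofReal_sub _ (hp0 (k+1)).le]
    rw [← ENNReal.ofReal_div_of_pos (hLpos k)]
    rw [← ENNReal.ofReal_mul (div_nonneg (by positivity) (hLpos k).le)]
    congr 1
    have h5 := (hp0 k).ne'
    have h6 := (hLpos k).ne'
    field_simp
  rw [tsum_congr hterm]
  by_contra hT
  set T : ℝ≥0∞ := ∑' k, ENNReal.ofReal ((p k - p (k+1)) / (p k * Real.logb 2 (1 / p k)))
    with hTdef
  have hsum : ∀ M : ℝ, ENNReal.ofReal M ≤ T := by
    intro M
    obtain ⟨N, hN⟩ := core_div p hp0 hp2 hpmono hphalf hptend M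
    calc ENNReal.ofReal M
        ≤ ENNReal.ofReal (∑ n ∈ Finset.range N,
            (p n - p (n+1)) / (p n * Real.logb 2 (1 / p n))) := ENNReal.ofReal_le_ofReal hN
      _ = ∑ n ∈ Finset.range N,
            ENNReal.ofReal ((p n - p (n+1)) / (p n * Real.logb 2 (1 / p n))) :=
          ENNReal.ofReal_sum_of_nonneg fun i _ =>
            div_nonneg (sub_nonneg.mpr (hpmono i)) (mul_nonneg (hp0 i).le (hLpos i).le)
      _ ≤ T := ENNReal.sum_le_tsum _
  have h1 := hsum (T.toReal + 1)
  have h2 : T = ENNReal.ofReal T.toReal := (ENNReal.ofReal_toReal hT).symm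
  rw [h2] at h1
  have h3 := (ENNReal.ofReal_le_ofReal_iff ENNReal.toReal_nonneg).mp h1
  rw [ENNReal.toReal_ofReal ENNReal.toReal_nonneg] at h3
  linarith

/-- measure-theoretic core of Theorem 1. For a non-atomic Borel
probability measure `μ` on the Cantor space there is a semimeasure bound `a` whose
ratio function `t(ω) = sup_n a(ω|n)/μ([ω|n])` satisfies
`∫_{t > 2} t / log₂ t dμ = ∞`. -/
theorem stmt10 (μ : Measure (ℕ → Bool)) [IsProbabilityMeasure μ]
    (hna : ∀ ω : ℕ → Bool, μ {ω} = 0) :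
    ∃ a : List Bool → ℝ, IsSemimeasureBound a ∧
      ∫⁻ ω in {ω | 2 < tFun μ a ω},
          tFun μ a ω / ENNReal.ofReal (Real.logb 2 (tFun μ a ω).toReal) ∂μ = ⊤ := by
  refine ⟨aFun μ, aFun_bound μ, ?_⟩
  have htend := tendsto_muB μ hna
  have hev : ∀ᶠ n in atTop, μ (cyl (Br μ n)) < 2⁻¹ :=
    htend.eventually (gt_mem_nhds (ENNReal.inv_pos.mpr ENNReal.ofNat_ne_top))
  obtain ⟨n₀, hn₀⟩ := eventually_atTop.mp hev
  set A : ℕ → Set (ℕ → Bool) :=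
    fun k => cyl (Br μ (k + n₀)) \ cyl (Br μ (k + n₀ + 1)) with hA
  have hAmeas : ∀ k, MeasurableSet (A k) :=
    fun k => (measurableSet_cyl _).diff (measurableSet_cyl _)
  have hdisj' : ∀ i j, i < j → Disjoint (A i) (A j) := by
    intro i j hij
    refine Set.disjoint_left.mpr fun ω h1 h2 => ?_
    exact h1.2 (cyl_Br_anti μ (by omega) h2.1)
  have hAdisj : Pairwise (Function.onFun Disjoint A) := by
    intro i j hij
    rcases lt_or_gt_of_ne hij with h | h
    · exact hdisj' i j h
    · exact (hdisj' j i h).symm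
  have hval : ∀ k, ∀ ω ∈ A k, tFun μ (aFun μ) ω = (μ (cyl (Br μ (k + n₀))))⁻¹ :=
    fun k ω hω => tFun_eq μ ω (k + n₀) hω.1 hω.2
  have hsub : ∀ k, A k ⊆ {ω | 2 < tFun μ (aFun μ) ω} := by
    intro k ω hω
    have h1 : μ (cyl (Br μ (k + n₀))) < 2⁻¹ := hn₀ (k + n₀) (by omega)
    simp only [Set.mem_setOf_eq, hval k ω hω]
    exact ENNReal.lt_inv_iff_lt_inv.mpr h1
  have hint : ∀ k, ∫⁻ ω in A k,
      (tFun μ (aFun μ) ω / ENNReal.ofReal (Real.logb 2 (tFun μ (aFun μ) ω).toReal)) ∂μ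
      = ((μ (cyl (Br μ (k + n₀))))⁻¹ /
          ENNReal.ofReal (Real.logb 2 (((μ (cyl (Br μ (k + n₀))))⁻¹).toReal))) *
        (μ (cyl (Br μ (k + n₀))) - μ (cyl (Br μ (k + n₀ + 1)))) := by
    intro k
    have hcongr : ∫⁻ ω in A k,
        (tFun μ (aFun μ) ω / ENNReal.ofReal (Real.logb 2 (tFun μ (aFun μ) ω).toReal)) ∂μ
        = ∫⁻ _ in A k, ((μ (cyl (Br μ (k + n₀))))⁻¹ /
            ENNReal.ofReal (Real.logb 2 (((μ (cyl (Br μ (k + n₀))))⁻¹).toReal))) ∂μ :=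
      setLIntegral_congr_fun (hAmeas k)
        (fun ω hω => by simp only [hval k ω hω])
    rw [hcongr, setLIntegral_const]
    congr 1
    exact measure_diff (cyl_Br_anti μ (Nat.le_succ _))
      (measurableSet_cyl _).nullMeasurableSet (measure_ne_top μ _)
  have key : ∑' k : ℕ, ∫⁻ ω in A k,
      (tFun μ (aFun μ) ω / ENNReal.ofReal (Real.logb 2 (tFun μ (aFun μ) ω).toReal)) ∂μ = ⊤ := by
    rw [tsum_congr hint]
    exact main_sum μ hna n₀ hn₀
  refine top_unique ?_
  calc (⊤ : ℝ≥0∞) = ∑' k : ℕ, ∫⁻ ω in A k,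
        (tFun μ (aFun μ) ω / ENNReal.ofReal (Real.logb 2 (tFun μ (aFun μ) ω).toReal)) ∂μ :=
        key.symm
    _ = ∫⁻ ω in ⋃ k, A k,
        (tFun μ (aFun μ) ω / ENNReal.ofReal (Real.logb 2 (tFun μ (aFun μ) ω).toReal)) ∂μ :=
        (lintegral_iUnion hAmeas hAdisj _).symm
    _ ≤ _ := lintegral_mono_set (Set.iUnion_subset hsub)
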